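/- Let u'_j = ψ(Δū_{j−1/2}, Δū_{j+1/2}) with ψ the van Albada limiter, f Lipschitz with Lipschitz constant L = max|f'|, and define g_j = f(ū_j − (λ/2)f'(ū_j)u'_j) + u'_j/(8λ) where the midpoint value is u^{n+1/2}_j = ū_j − (λ/2)a(ū_j)u'_j. If λL ≤ (−1 + √(3/2 + 3√2/4))/(1 + √2), then λ|g_{j+1} − g_j| ≤ (1/2)|Δū_{j+1/2}| whenever Δū_{j+1/2} ≠ 0. -/
import Mathlib


noncomputable def vanAlbada (a b : ℝ) : ℝ := (a ^ 2 * b + a * b ^ 2) / (a ^ 2 + b ^ 2)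

lemma vanAlbada_comm (a b : ℝ) : vanAlbada a b = vanAlbada b a := by
  unfold vanAlbada
  rw [add_comm (a ^ 2) (b ^ 2)]
  ring_nf

lemma vanAlbada_rep (x d : ℝ) (hd : d ≠ 0) :
    ∃ c : ℝ, vanAlbada x d = c * d ∧ (1 - Real.sqrt 2) / 2 ≤ c ∧ c ≤ (1 + Real.sqrt 2) / 2 := by
  have hr2 : Real.sqrt 2 ^ 2 = 2 := Real.sq_sqrt (by norm_num)
  have hr1 : 1 ≤ Real.sqrt 2 := by nlinarith [Real.sqrt_nonneg 2]
  have hr1' : (0:ℝ) ≤ Real.sqrt 2 - 1 := by linarith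
  have hd2 : (0:ℝ) < d ^ 2 := by
    have := abs_pos.mpr hd
    nlinarith [sq_abs d]
  have hpos : 0 < x ^ 2 + d ^ 2 := by nlinarith [sq_nonneg x]
  refine ⟨x * (x + d) / (x ^ 2 + d ^ 2), ?_, ?_, ?_⟩
  · unfold vanAlbada; field_simp
  · rw [le_div_iff₀ hpos]
    nlinarith [sq_nonneg (x + (Real.sqrt 2 - 1) * d), hr1', sq_nonneg x, sq_nonneg d,
      mul_nonneg hr1' (sq_nonneg d), mul_nonneg hr1' (sq_nonneg x)]
  · rw [div_le_iff₀ hpos]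
    nlinarith [sq_nonneg ((Real.sqrt 2 - 1) * x - d), hr1', sq_nonneg x, sq_nonneg d,
      mul_nonneg hr1' (sq_nonneg d), mul_nonneg hr1' (sq_nonneg x)]

lemma quad_bound (r s μ : ℝ) (hr2 : r ^ 2 = 2) (hr1 : 1 ≤ r) (hs0 : 0 ≤ s)
    (hs : s ^ 2 = 3 / 2 + 3 * r / 4) (hμ0 : 0 ≤ μ) (hμ : μ ≤ (-1 + s) / (1 + r)) :
    (1 + r) / 2 * μ ^ 2 + μ + r / 8 ≤ 1 / 2 := by
  have hr0 : (0:ℝ) < 1 + r := by linarith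
  have h1 : μ * (1 + r) ≤ -1 + s := (le_div_iff₀ hr0).mp hμ
  nlinarith [mul_nonneg (by linarith : (0:ℝ) ≤ s - (μ * (1 + r) + 1))
      (by nlinarith : (0:ℝ) ≤ s + (μ * (1 + r) + 1)), mul_nonneg hμ0 hμ0]

/-- Generalized CFL condition for the modified numerical flux of the NT scheme
with van Albada limiter. -/
theorem NT_modified_flux_CFL (f : ℝ → ℝ) (hf : ContDiff ℝ 1 f) (L : ℝ)
    (hL : ∀ x : ℝ, |deriv f x| ≤ L)
    (hLip : ∀ x y : ℝ, |f x - f y| ≤ L * |x - y|)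
    (lam : ℝ) (hlam : 0 < lam)
    (hCFL : lam * L ≤
      (-1 + Real.sqrt (3 / 2 + 3 * Real.sqrt 2 / 4)) / (1 + Real.sqrt 2))
    (u u' g : ℤ → ℝ)
    (hu' : ∀ j : ℤ, u' j = vanAlbada (u j - u (j - 1)) (u (j + 1) - u j))
    (hg : ∀ j : ℤ, g j =
      f (u j - lam / 2 * (deriv f (u j) * u' j)) + u' j / (8 * lam)) :
    ∀ j : ℤ, u (j + 1) - u j ≠ 0 →
      lam * |g (j + 1) - g j| ≤ (1 / 2) * |u (j + 1) - u j| := by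
  intro j hd
  set r : ℝ := Real.sqrt 2 with hr
  have hr2 : r ^ 2 = 2 := Real.sq_sqrt (by norm_num)
  have hr1 : 1 ≤ r := by nlinarith [Real.sqrt_nonneg 2]
  have hL0 : 0 ≤ L := le_trans (abs_nonneg _) (hL 0)
  have hμ0 : 0 ≤ lam * L := mul_nonneg hlam.le hL0
  have key : (1 + r) / 2 * (lam * L) ^ 2 + lam * L + r / 8 ≤ 1 / 2 :=
    quad_bound r (Real.sqrt (3 / 2 + 3 * r / 4)) (lam * L) hr2 hr1
      (Real.sqrt_nonneg _) (Real.sq_sqrt (by positivity)) hμ0 hCFL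
  -- representations of the limited slopes
  obtain ⟨c₁, e₁, lb₁, ub₁⟩ := vanAlbada_rep (u j - u (j - 1)) (u (j + 1) - u j) hd
  obtain ⟨c₂, e₂, lb₂, ub₂⟩ := vanAlbada_rep (u (j + 1 + 1) - u (j + 1)) (u (j + 1) - u j) hd
  have E1 : u' j = c₁ * (u (j + 1) - u j) := by rw [hu' j, e₁]
  have E2 : u' (j + 1) = c₂ * (u (j + 1) - u j) := by
    rw [hu' (j + 1), show (j + 1 - 1 : ℤ) = j from by ring, vanAlbada_comm]
    exact e₂
  have habs : (0:ℝ) < |u (j + 1) - u j| := abs_pos.mpr hd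
  have hc1 : |c₁| ≤ (1 + r) / 2 := abs_le.mpr ⟨by linarith, ub₁⟩
  have hc2 : |c₂| ≤ (1 + r) / 2 := abs_le.mpr ⟨by linarith, ub₂⟩
  have hdc : |c₂ - c₁| ≤ r := abs_le.mpr ⟨by linarith, by linarith⟩
  have hu1b : |u' j| ≤ (1 + r) / 2 * |u (j + 1) - u j| := by
    rw [E1, abs_mul]; gcongr
  have hu2b : |u' (j + 1)| ≤ (1 + r) / 2 * |u (j + 1) - u j| := by
    rw [E2, abs_mul]; gcongr
  have hdu : |u' (j + 1) - u' j| ≤ r * |u (j + 1) - u j| := by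
    rw [E1, E2, ← sub_mul, abs_mul]; gcongr
  set P : ℝ := u j - lam / 2 * (deriv f (u j) * u' j) with hP
  set Q : ℝ := u (j + 1) - lam / 2 * (deriv f (u (j + 1)) * u' (j + 1)) with hQ
  have hgdiff : g (j + 1) - g j = (f Q - f P) + (u' (j + 1) - u' j) / (8 * lam) := by
    rw [hg (j + 1), hg j]; ring
  have hQP : |Q - P| ≤ (1 + lam * L * (1 + r) / 2) * |u (j + 1) - u j| := by
    have hid : Q - P = (u (j + 1) - u j)
        - lam / 2 * (deriv f (u (j + 1)) * u' (j + 1))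
        + lam / 2 * (deriv f (u j) * u' j) := by rw [hP, hQ]; ring
    have hA : |lam / 2 * (deriv f (u (j + 1)) * u' (j + 1))|
        = lam / 2 * (|deriv f (u (j + 1))| * |u' (j + 1)|) := by
      rw [abs_mul, abs_mul, abs_of_pos (by linarith : (0:ℝ) < lam / 2)]
    have hB : |lam / 2 * (deriv f (u j) * u' j)|
        = lam / 2 * (|deriv f (u j)| * |u' j|) := by
      rw [abs_mul, abs_mul, abs_of_pos (by linarith : (0:ℝ) < lam / 2)]
    calc |Q - P| ≤ |u (j + 1) - u j| + lam / 2 * (|deriv f (u (j + 1))| * |u' (j + 1)|)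
          + lam / 2 * (|deriv f (u j)| * |u' j|) := by
            rw [hid]
            have t1 := abs_add_le ((u (j + 1) - u j) - lam / 2 * (deriv f (u (j + 1)) * u' (j + 1)))
              (lam / 2 * (deriv f (u j) * u' j))
            have t2 := abs_sub (u (j + 1) - u j) (lam / 2 * (deriv f (u (j + 1)) * u' (j + 1)))
            rw [hB] at t1
            rw [hA] at t2
            linarith
      _ ≤ |u (j + 1) - u j| + lam / 2 * (L * ((1 + r) / 2 * |u (j + 1) - u j|))
          + lam / 2 * (L * ((1 + r) / 2 * |u (j + 1) - u j|)) := by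
            gcongr <;> first | exact hL _ | exact hu1b | exact hu2b
      _ = (1 + lam * L * (1 + r) / 2) * |u (j + 1) - u j| := by ring
  have hstep : lam * |g (j + 1) - g j| ≤ lam * L * |Q - P| + |u' (j + 1) - u' j| / 8 := by
    rw [hgdiff]
    have t2 : |(u' (j + 1) - u' j) / (8 * lam)| = |u' (j + 1) - u' j| / (8 * lam) := by
      rw [abs_div, abs_of_pos (by linarith : (0:ℝ) < 8 * lam)]
    calc lam * |f Q - f P + (u' (j + 1) - u' j) / (8 * lam)|
        ≤ lam * (|f Q - f P| + |u' (j + 1) - u' j| / (8 * lam)) := by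
          have t1 := abs_add_le (f Q - f P) ((u' (j + 1) - u' j) / (8 * lam))
          rw [t2] at t1
          exact mul_le_mul_of_nonneg_left t1 hlam.le
      _ = lam * |f Q - f P| + |u' (j + 1) - u' j| / 8 := by
          field_simp
      _ ≤ lam * L * |Q - P| + |u' (j + 1) - u' j| / 8 := by
          nlinarith [mul_le_mul_of_nonneg_left (hLip Q P) hlam.le]
  calc lam * |g (j + 1) - g j| ≤ lam * L * |Q - P| + |u' (j + 1) - u' j| / 8 := hstep
    _ ≤ lam * L * ((1 + lam * L * (1 + r) / 2) * |u (j + 1) - u j|)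
        + (r * |u (j + 1) - u j|) / 8 := by gcongr
    _ = ((1 + r) / 2 * (lam * L) ^ 2 + lam * L + r / 8) * |u (j + 1) - u j| := by ring
    _ ≤ (1 / 2) * |u (j + 1) - u j| := mul_le_mul_of_nonneg_right key habs.le
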